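/- If a polynomial translation surface (f, g polynomials) has vanishing second Gaussian curvature numerator num ≡ 0 (with num defined via α = f', β = g'), then f'' ≡ 0 or g'' ≡ 0, i.e., the surface is a cylinder. -/

import Mathlib

open Polynomial

/-- Numerator of the second Gaussian curvature `K_II = num/(4Δ^{3/2})` of the translation
surface with `α = f'`, `β = g'`. -/
noncomputable def numKII (α β : ℝ → ℝ) (u v : ℝ) : ℝ :=
  -2 * α u ^ 2 * deriv α u ^ 2 * deriv β v - 2 * deriv α u * β v ^ 2 * deriv β v ^ 2 +
    2 * α u ^ 2 * deriv α u * deriv β v ^ 2 + 2 * deriv α u ^ 2 * β v ^ 2 * deriv β v +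
    2 * deriv α u * deriv β v ^ 2 + 2 * deriv α u ^ 2 * deriv β v +
    deriv α u * β v * deriv (deriv β) v + α u * deriv (deriv α) u * deriv β v +
    α u ^ 2 * deriv α u * β v * deriv (deriv β) v +
    α u * deriv (deriv α) u * β v ^ 2 * deriv β v +
    deriv α u * β v ^ 3 * deriv (deriv β) v + α u ^ 3 * deriv (deriv α) u * deriv β v

/-!
Write `α = f'`, `β = g'` and `m = deg α`. For fixed `v` the numerator is a polynomial in `u`,
and if `m ≥ 2` its coefficient of `u^(4m-2)` is `-m(m+1) lc(α)⁴ β'(v)`: only the terms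
`-2α²α'²β'` and `α³α''β'` reach that degree. So `deg α ≥ 2` forces `β' ≡ 0`, and symmetrically
`deg β ≥ 2` forces `α' ≡ 0`. If both `α` and `β` have degree one, then at a point where `α = 1`
and `β = 0` the numerator equals `4α'β'² ≠ 0`.
-/

lemma Polynomial.exists_eval_eq_of_natDegree_eq_one {K : Type*} [Field K] {p : K[X]}
    (hp : p.natDegree = 1) (y : K) : ∃ x, p.eval x = y := by
  have hdeg : p.degree = 1 := degree_eq_iff_natDegree_eq_of_pos one_pos |>.mpr hp
  obtain ⟨x, hx⟩ := exists_root_of_degree_eq_one (p := p - C y) (by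
    rw [degree_sub_C (by rw [hdeg]; exact zero_lt_one), hdeg])
  exact ⟨x, sub_eq_zero.mp (by simpa using hx)⟩

lemma Polynomial.derivative_eq_C_leadingCoeff_of_natDegree_eq_one {R : Type*} [Semiring R]
    {p : R[X]} (hp : p.natDegree = 1) : derivative p = C p.leadingCoeff := by
  conv_lhs => rw [eq_X_add_C_of_natDegree_le_one hp.le]
  simp [leadingCoeff, hp]

lemma Polynomial.deriv_eval_eq_eval_derivative {𝕜 : Type*} [NontriviallyNormedField 𝕜]
    (p : 𝕜[X]) : _root_.deriv (fun x => p.eval x) = fun x => p.derivative.eval x :=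
  _root_.funext fun _ => p.deriv

lemma numKII_comm (α β : ℝ → ℝ) (u v : ℝ) : numKII α β u v = numKII β α v u := by
  unfold numKII; ring

/-- `numKII` at a fixed `v` as a polynomial in `u`; `b, b₁, b₂` stand for `β v, β' v, β'' v`. -/
noncomputable def numKIISlice (A : ℝ[X]) (b b₁ b₂ : ℝ) : ℝ[X] :=
  C b₁ * (C 2 * derivative A ^ 2 * (C (1 + b ^ 2) - A ^ 2) +
      A * derivative (derivative A) * (C (1 + b ^ 2) + A ^ 2)) +
    derivative A * (C (2 * b₁ ^ 2) * (C (1 - b ^ 2) + A ^ 2) +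
      C (b * b₂) * (C (1 + b ^ 2) + A ^ 2))

lemma numKII_polynomial_eq_eval_numKIISlice (A B : ℝ[X]) (u v : ℝ) :
    numKII (fun x => A.eval x) (fun y => B.eval y) u v =
      (numKIISlice A (B.eval v) (B.derivative.eval v) (B.derivative.derivative.eval v)).eval u := by
  simp only [numKII, numKIISlice, deriv_eval_eq_eval_derivative, eval_add, eval_sub, eval_mul,
    eval_pow, eval_C]
  ring

lemma coeff_numKIISlice {A : ℝ[X]} {n : ℕ} (hA : A.natDegree = n + 2) (b b₁ b₂ : ℝ) :
    (numKIISlice A b b₁ b₂).coeff (4 * n + 6) =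
      -b₁ * ((n + 2) * (n + 3) * A.leadingCoeff ^ 4) := by
  set A' := derivative A
  set A'' := derivative A'
  have hA' : A'.natDegree ≤ n + 1 := by simp [A', hA]
  have hA'' : A''.natDegree ≤ n := by simp [A'', A', hA]
  have hc' : A'.coeff (n + 1) = A.leadingCoeff * (n + 2) := by
    rw [coeff_derivative, leadingCoeff, hA]; push_cast; ring
  have hc'' : A''.coeff n = A.leadingCoeff * (n + 2) * (n + 1) := by
    simp [A'', coeff_derivative, hc']
  obtain ⟨R, hslice, hR⟩ : ∃ R : ℝ[X], numKIISlice A b b₁ b₂ =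
      C b₁ * (A ^ 3 * A'' - C 2 * (A' ^ 2 * A ^ 2)) + R ∧ R.natDegree < 4 * n + 6 := by
    refine ⟨C b₁ * C (1 + b ^ 2) * (C 2 * A' ^ 2 + A * A'') +
      A' * (C (2 * b₁ ^ 2 * (1 - b ^ 2) + b * b₂ * (1 + b ^ 2)) + C (2 * b₁ ^ 2 + b * b₂) * A ^ 2),
      by simp only [numKIISlice, C_add, C_mul, C_sub, C_pow, map_one]; ring, ?_⟩
    refine lt_of_le_of_lt (b := 3 * n + 5) ?_ (by omega)
    compute_degree
    simp [hA]; omega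
  have hcube : (A ^ 3 * A'').coeff (4 * n + 6) = A.leadingCoeff ^ 3 * A''.coeff n := by
    rw [show 4 * n + 6 = 3 * (n + 2) + n by ring, coeff_mul_add_eq_of_natDegree_le
      (natDegree_pow_le_of_le 3 hA.le) hA'', coeff_pow_of_natDegree_le hA.le, leadingCoeff, hA]
  have hsq : (A' ^ 2 * A ^ 2).coeff (4 * n + 6) = A'.coeff (n + 1) ^ 2 * A.leadingCoeff ^ 2 := by
    rw [show 4 * n + 6 = 2 * (n + 1) + 2 * (n + 2) by ring, coeff_mul_add_eq_of_natDegree_le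
      (natDegree_pow_le_of_le 2 hA') (natDegree_pow_le_of_le 2 hA.le),
      coeff_pow_of_natDegree_le hA', coeff_pow_of_natDegree_le hA.le, leadingCoeff, hA]
  rw [hslice, coeff_add, coeff_eq_zero_of_natDegree_lt hR, coeff_C_mul, coeff_sub, coeff_C_mul,
    hcube, hsq, hc'', hc']
  ring

lemma derivative_eq_zero_of_forall_numKII_eq_zero {A B : ℝ[X]} (hA : 2 ≤ A.natDegree)
    (h : ∀ u v, numKII (fun x => A.eval x) (fun y => B.eval y) u v = 0) : derivative B = 0 := by
  obtain ⟨n, hn⟩ := Nat.exists_eq_add_of_le' hA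
  have hlc : A.leadingCoeff ≠ 0 := leadingCoeff_ne_zero.mpr (ne_zero_of_natDegree_gt hA)
  refine Polynomial.funext fun v => ?_
  have hslice : numKIISlice A (B.eval v) (B.derivative.eval v)
      (B.derivative.derivative.eval v) = 0 := Polynomial.funext fun u => by
    rw [← numKII_polynomial_eq_eval_numKIISlice, h, eval_zero]
  have hcoeff := coeff_numKIISlice hn (B.eval v) (B.derivative.eval v)
    (B.derivative.derivative.eval v)
  rw [hslice, coeff_zero, eq_comm, mul_eq_zero, neg_eq_zero] at hcoeff
  rw [eval_zero]
  exact hcoeff.resolve_right (by positivity)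

lemma exists_numKII_ne_zero_of_natDegree_eq_one {A B : ℝ[X]} (hA : A.natDegree = 1)
    (hB : B.natDegree = 1) : ∃ u v, numKII (fun x => A.eval x) (fun y => B.eval y) u v ≠ 0 := by
  obtain ⟨u, hu⟩ := exists_eval_eq_of_natDegree_eq_one hA 1
  obtain ⟨v, hv⟩ := exists_eval_eq_of_natDegree_eq_one hB 0
  refine ⟨u, v, ?_⟩
  -- at such a point the numerator reduces to `4 A' B'²`
  rw [numKII_polynomial_eq_eval_numKIISlice, numKIISlice,
    derivative_eq_C_leadingCoeff_of_natDegree_eq_one hA,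
    derivative_eq_C_leadingCoeff_of_natDegree_eq_one hB]
  simp only [derivative_C, eval_add, eval_sub, eval_mul, eval_pow, eval_C, eval_zero, hu, hv]
  norm_num [ne_zero_of_natDegree_gt hA.ge, ne_zero_of_natDegree_gt hB.ge]

/-- If a polynomial translation surface (`f, g` polynomials) has vanishing second Gaussian
curvature numerator, then `f'' ≡ 0` or `g'' ≡ 0`, i.e. the surface is a cylinder. -/
theorem stmt_17 (f g : Polynomial ℝ)
    (h : ∀ u v : ℝ,
      numKII (fun x => f.derivative.eval x) (fun y => g.derivative.eval y) u v = 0) :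
    derivative (derivative f) = 0 ∨ derivative (derivative g) = 0 := by
  rcases lt_or_ge 1 f.derivative.natDegree with hf | hf
  · exact Or.inr (derivative_eq_zero_of_forall_numKII_eq_zero hf h)
  rcases lt_or_ge 1 g.derivative.natDegree with hg | hg
  · exact Or.inl (derivative_eq_zero_of_forall_numKII_eq_zero hg
      fun u v => (numKII_comm _ _ u v).trans (h v u))
  by_contra! hfg
  obtain ⟨u, v, hne⟩ := exists_numKII_ne_zero_of_natDegree_eq_one
    (hf.antisymm (Nat.one_le_iff_ne_zero.mpr (derivative_ne_zero.mp hfg.1)))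
    (hg.antisymm (Nat.one_le_iff_ne_zero.mpr (derivative_ne_zero.mp hfg.2)))
  exact hne (h u v)
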